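/- Under the BBvD hypothesis, if the extended map δ̂: Hom_k(Λ*Φ, Ξ) → Hom(Λ*Φ, Φ) is injective, then the bracket [π₁,π₂] = π₁⊙δ̂(π₂) − π₂⊙δ̂(π₁) + Ĉ(π₁,π₂) on Hom_k(Λ*Φ,Ξ) satisfies the Jacobi identity, making Hom_k(Λ*Φ, Ξ) a Lie algebra. -/

import Mathlib

open TensorProduct

noncomputable section

/-- A *coderivation* on a coalgebra `(C, Δ)`: `Δ ∘ Θ = (Θ ⊗ 1 + 1 ⊗ Θ) ∘ Δ`. -/
def IsCoderivation {A C : Type*} [CommRing A] [AddCommGroup C] [Module A C]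
    (Δ : C →ₗ[A] C ⊗[A] C) (Θ : C →ₗ[A] C) : Prop :=
  Δ ∘ₗ Θ = (LinearMap.rTensor C Θ + LinearMap.lTensor C Θ) ∘ₗ Δ

/-- An axiomatization of the cofree nilpotent (graded co)commutative coalgebra `Λ*Φ`
cogenerated by `Φ`, together with its wedge product `m`, unit `one`, counit `ε`,
inclusion `ι` of the cogenerators and projection `p` onto the cogenerators.
The field `cofree_coder` expresses cofreeness: a coderivation is determined by its
corestriction to the cogenerators. -/
structure WedgeBialgebra (A : Type*) (Φ : Type*) (C : Type*) [CommRing A]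
    [AddCommGroup Φ] [Module A Φ] [AddCommGroup C] [Module A C] where
  Δ : C →ₗ[A] C ⊗[A] C
  ε : C →ₗ[A] A
  m : C ⊗[A] C →ₗ[A] C
  one : C
  ι : Φ →ₗ[A] C
  p : C →ₗ[A] Φ
  coassoc : (TensorProduct.assoc A C C C).toLinearMap ∘ₗ (LinearMap.rTensor C Δ) ∘ₗ Δ
      = (LinearMap.lTensor C Δ) ∘ₗ Δ
  cocomm : (TensorProduct.comm A C C).toLinearMap ∘ₗ Δ = Δ
  counit_left : ∀ x : C, (TensorProduct.lid A C) ((LinearMap.rTensor C ε) (Δ x)) = x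
  counit_right : ∀ x : C, (TensorProduct.rid A C) ((LinearMap.lTensor C ε) (Δ x)) = x
  mul_compat : Δ ∘ₗ m = (TensorProduct.map m m) ∘ₗ
      (TensorProduct.tensorTensorTensorComm A C C C C).toLinearMap ∘ₗ (TensorProduct.map Δ Δ)
  one_mul : ∀ x : C, m (one ⊗ₜ x) = x
  mul_one : ∀ x : C, m (x ⊗ₜ one) = x
  mul_assoc : ∀ x y z : C, m (m (x ⊗ₜ y) ⊗ₜ z) = m (x ⊗ₜ m (y ⊗ₜ z))
  Δ_one : Δ one = one ⊗ₜ one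
  ε_one : ε one = 1
  ε_mul : ∀ x y : C, ε (m (x ⊗ₜ y)) = ε x * ε y
  Δ_ι : ∀ φ : Φ, Δ (ι φ) = ι φ ⊗ₜ one + one ⊗ₜ ι φ
  ε_ι : ∀ φ : Φ, ε (ι φ) = 0
  p_ι : ∀ φ : Φ, p (ι φ) = φ
  p_one : p one = 0
  p_mul : ∀ x y : C, p (m (x ⊗ₜ y)) = ε x • p y + ε y • p x
  cofree_coder : ∀ Θ : C →ₗ[A] C, IsCoderivation Δ Θ → p ∘ₗ Θ = 0 → Θ = 0

namespace WedgeBialgebra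

variable {A Φ C : Type*} [CommRing A] [AddCommGroup Φ] [Module A Φ]
  [AddCommGroup C] [Module A C] (W : WedgeBialgebra A Φ C)

/-- The lift `h̄ = m ∘ (h ⊗ 1) ∘ Δ : Λ*Φ → Λ*Φ` of `h : Λ*Φ → Φ`. -/
def coderOf (h : C →ₗ[A] Φ) : C →ₗ[A] C :=
  W.m ∘ₗ (LinearMap.rTensor C (W.ι ∘ₗ h)) ∘ₗ W.Δ

/-- The Gerstenhaber comp operation `f ⊙ g = f ∘ ḡ`. -/
def gcomp (f g : C →ₗ[A] Φ) : C →ₗ[A] Φ := f ∘ₗ W.coderOf g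

/-- The Gerstenhaber bracket `[f,g] = f ∘ ḡ − g ∘ f̄` on `Hom(Λ*Φ, Φ)`. -/
def gbracket (f g : C →ₗ[A] Φ) : C →ₗ[A] Φ := W.gcomp f g - W.gcomp g f

end WedgeBialgebra

/-- The wedge word `φ₁ ∧ ⋯ ∧ φ_n ∈ Λ*Φ` of a family of elements of `Φ`. -/
noncomputable def WedgeBialgebra.wedgeFam {A Φ C : Type*} [CommRing A] [AddCommGroup Φ] [Module A Φ]
  [AddCommGroup C] [Module A C] (W : WedgeBialgebra A Φ C) : ∀ {n : ℕ}, (Fin n → Φ) → C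
  | 0, _ => W.one
  | _ + 1, φ => W.m (W.ι (φ 0) ⊗ₜ WedgeBialgebra.wedgeFam W fun i => φ i.succ)

namespace WedgeBialgebra

variable {A Φ C : Type*} [CommRing A] [AddCommGroup Φ] [Module A Φ]
  [AddCommGroup C] [Module A C] (W : WedgeBialgebra A Φ C)

section Parameters

variable {Ξ : Type*} [AddCommGroup Ξ] [Module A Ξ]

/-- A gauge parameter `ξ ∈ Ξ` viewed as the element of `Hom(Λ*Φ, Ξ)` supported on
the scalars, with value `ξ` at `1`. -/
def constPar (ξ : Ξ) : C →ₗ[A] Ξ := (LinearMap.toSpanSingleton A Ξ ξ) ∘ₗ W.ε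

/-- The extension `δ̂(π) = ev ∘ (δ∘π ⊗ 1) ∘ Δ` of `δ : Ξ → Hom(Λ*Φ,Φ)`
to `Hom(Λ*Φ, Ξ)`. -/
def deltaHat (δ : Ξ →ₗ[A] (C →ₗ[A] Φ)) (π : C →ₗ[A] Ξ) : C →ₗ[A] Φ :=
  (TensorProduct.lift (δ ∘ₗ π)) ∘ₗ W.Δ

/-- The extension `Ĉ(π₁,π₂) = C ∘ ((π₁⊗π₂)⊗1) ∘ (Δ⊗1) ∘ Δ` of the correction term
`C : Ξ ⊗ Ξ → Hom(Λ*Φ,Ξ)`. -/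
def cHat (Cm : Ξ →ₗ[A] Ξ →ₗ[A] (C →ₗ[A] Ξ)) (π₁ π₂ : C →ₗ[A] Ξ) : C →ₗ[A] Ξ :=
  (TensorProduct.lift (TensorProduct.lift ((Cm ∘ₗ π₁).compl₂ π₂))) ∘ₗ
    (LinearMap.rTensor C W.Δ) ∘ₗ W.Δ

/-- The corrected bracket `[π₁,π₂] = π₁⊙δ̂(π₂) − π₂⊙δ̂(π₁) + Ĉ(π₁,π₂)`
on `Hom(Λ*Φ, Ξ)`. -/
def parBracket (δ : Ξ →ₗ[A] (C →ₗ[A] Φ)) (Cm : Ξ →ₗ[A] Ξ →ₗ[A] (C →ₗ[A] Ξ))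
    (π₁ π₂ : C →ₗ[A] Ξ) : C →ₗ[A] Ξ :=
  π₁ ∘ₗ W.coderOf (W.deltaHat δ π₂) - π₂ ∘ₗ W.coderOf (W.deltaHat δ π₁) + W.cHat Cm π₁ π₂

end Parameters

end WedgeBialgebra

/-!
The map `δ̂` intertwines the corrected bracket with the Gerstenhaber bracket, which satisfies the
Jacobi identity; injectivity of `δ̂` carries the identity back to `Hom(Λ*Φ, Ξ)`.

Jacobi for the Gerstenhaber bracket: by cofreeness a coderivation is determined by its
corestriction, so `f ↦ f̄` turns `[f, g]` into the commutator `f̄ ∘ ḡ - ḡ ∘ f̄`.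

Intertwining: for a coderivation `X`, `δ̂(π ∘ X) = δ̂(π) ∘ X - Σ δ(π x₍₁₎)(X x₍₂₎)`, and
`δ̂(Ĉ(π₁, π₂))` is exactly the difference of the two error terms this produces in `δ̂[π₁, π₂]`:
once BBvD rewrites `δ̂(C(ξ, η))` as `[δξ, δη]`, coassociativity and cocommutativity bring both
sides to the iterated Sweedler sum `Σ [δ(π₁ x₍₁₎), δ(π₂ x₍₂₎)](x₍₃₎)`.
-/

namespace WedgeBialgebra

open LinearMap

variable {A Φ C : Type*} [CommRing A] [AddCommGroup Φ] [Module A Φ]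
  [AddCommGroup C] [Module A C] (W : WedgeBialgebra A Φ C)

theorem isCoderivation_sub {X Y : C →ₗ[A] C} (hX : IsCoderivation W.Δ X)
    (hY : IsCoderivation W.Δ Y) : IsCoderivation W.Δ (X - Y) := by
  rw [IsCoderivation, comp_sub, hX, hY, rTensor_sub, lTensor_sub, ← sub_comp]
  congr 1
  abel

theorem isCoderivation_commutator {X Y : C →ₗ[A] C} (hX : IsCoderivation W.Δ X)
    (hY : IsCoderivation W.Δ Y) : IsCoderivation W.Δ (X ∘ₗ Y - Y ∘ₗ X) := by
  have hXY : ∀ {X Y : C →ₗ[A] C}, IsCoderivation W.Δ X → IsCoderivation W.Δ Y →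
      W.Δ ∘ₗ X ∘ₗ Y = ((rTensor C X + lTensor C X) ∘ₗ (rTensor C Y + lTensor C Y)) ∘ₗ W.Δ :=
    fun hX hY => by rw [← comp_assoc, hX, comp_assoc, hY, comp_assoc]
  rw [IsCoderivation, comp_sub, hXY hX hY, hXY hY hX, ← sub_comp]
  congr 1
  simp only [comp_add, add_comp, ← rTensor_comp, ← lTensor_comp, rTensor_sub, lTensor_sub,
    rTensor_comp_lTensor, lTensor_comp_rTensor]
  abel

section Sweedler

variable {P Q : Type*} [AddCommGroup P] [Module A P] [AddCommGroup Q] [Module A Q]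

/-- `x ↦ Σ F x₍₁₎ x₍₂₎` in Sweedler notation. -/
def sweedler : (C →ₗ[A] C →ₗ[A] P) →ₗ[A] C →ₗ[A] P :=
  lcomp A P W.Δ ∘ₗ (lift.equiv (RingHom.id A) C C P).toLinearMap

theorem sweedler_apply (F : C →ₗ[A] C →ₗ[A] P) : W.sweedler F = lift F ∘ₗ W.Δ := rfl

theorem comp_sweedler (g : P →ₗ[A] Q) (F : C →ₗ[A] C →ₗ[A] P) :
    g ∘ₗ W.sweedler F = W.sweedler (F.compr₂ g) := by
  rw [sweedler_apply, sweedler_apply, lift_compr₂, comp_assoc]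

theorem sweedler_sweedler (τ : C →ₗ[A] C →ₗ[A] C →ₗ[A] P) :
    W.sweedler (W.sweedler τ) = W.sweedler (W.sweedler ∘ₗ τ) := by
  set Ψ : C ⊗[A] (C ⊗[A] C) →ₗ[A] P := lift (lift.equiv (RingHom.id A) C C P ∘ₗ τ)
  have hl : lift (W.sweedler τ) =
      Ψ ∘ₗ (TensorProduct.assoc A C C C).toLinearMap ∘ₗ rTensor C W.Δ := by
    rw [← comp_assoc, show Ψ ∘ₗ (TensorProduct.assoc A C C C).toLinearMap = lift (lift τ) from
      TensorProduct.ext_threefold fun _ _ _ => rfl, rTensor, lift_comp_map]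
    rfl
  have hr : lift (W.sweedler ∘ₗ τ) = Ψ ∘ₗ lTensor C W.Δ := TensorProduct.ext' fun _ _ => rfl
  rw [W.sweedler_apply (W.sweedler τ), W.sweedler_apply (W.sweedler ∘ₗ τ), hl, hr, comp_assoc,
    comp_assoc, W.coassoc, comp_assoc]

theorem sweedler_flip (F : C →ₗ[A] C →ₗ[A] P) : W.sweedler F.flip = W.sweedler F := by
  rw [sweedler_apply, sweedler_apply, ← lift_comp_comm_eq, comp_assoc, W.cocomm]

theorem sweedler_comp_of_isCoderivation (F : C →ₗ[A] C →ₗ[A] P) {X : C →ₗ[A] C}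
    (hX : IsCoderivation W.Δ X) :
    W.sweedler F ∘ₗ X = W.sweedler (F ∘ₗ X) + W.sweedler (F.compl₂ X) := by
  rw [sweedler_apply, comp_assoc, hX, add_comp, comp_add, ← comp_assoc, ← comp_assoc,
    rTensor, lTensor, lift_comp_map, lift_comp_map]
  rfl

theorem sweedler_mk_comp (X : C →ₗ[A] C) :
    W.sweedler (TensorProduct.mk A C C ∘ₗ X) = rTensor C X ∘ₗ W.Δ :=
  rfl

theorem sweedler_mk_flip_comp (X : C →ₗ[A] C) :
    W.sweedler ((TensorProduct.mk A C C).flip ∘ₗ X) = lTensor C X ∘ₗ W.Δ := by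
  rw [← sweedler_flip]
  rfl

end Sweedler

theorem isCoderivation_sweedler {G : C →ₗ[A] C →ₗ[A] C} (hG : ∀ a, IsCoderivation W.Δ (G a)) :
    IsCoderivation W.Δ (W.sweedler G) := by
  have hsplit : G.compr₂ W.Δ = W.sweedler ∘ₗ G.compr₂ (TensorProduct.mk A C C)
      + W.sweedler ∘ₗ G.compr₂ (TensorProduct.mk A C C).flip := by
    ext1 a
    exact (hG a).trans (by rw [add_comp, ← sweedler_mk_comp, ← sweedler_mk_flip_comp]; rfl)
  rw [IsCoderivation, comp_sweedler, add_comp, ← sweedler_mk_comp, ← sweedler_mk_flip_comp,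
    comp_sweedler, comp_sweedler, sweedler_sweedler, sweedler_sweedler, ← map_add, hsplit]

def leftMul : Φ →ₗ[A] C →ₗ[A] C := (TensorProduct.mk A C C).compr₂ W.m ∘ₗ W.ι

theorem coderOf_eq_sweedler (h : C →ₗ[A] Φ) : W.coderOf h = W.sweedler (W.leftMul ∘ₗ h) := by
  rw [coderOf, sweedler_apply, ← comp_assoc]
  congr 1
  exact TensorProduct.ext' fun _ _ => rfl

theorem isCoderivation_leftMul (φ : Φ) : IsCoderivation W.Δ (W.leftMul φ) := by
  ext y
  have hΔ := LinearMap.congr_fun W.mul_compat (W.ι φ ⊗ₜ y)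
  simp only [leftMul, comp_apply, compr₂_apply, mk_apply, LinearMap.add_apply] at hΔ ⊢
  rw [hΔ, map_tmul, W.Δ_ι]
  induction W.Δ y using TensorProduct.induction_on with
  | zero => simp
  | tmul a b => simp [add_tmul, W.one_mul]
  | add s t hs ht => simp only [tmul_add, map_add, hs, ht, add_add_add_comm]

theorem isCoderivation_coderOf (h : C →ₗ[A] Φ) : IsCoderivation W.Δ (W.coderOf h) := by
  rw [coderOf_eq_sweedler]
  exact W.isCoderivation_sweedler fun a => W.isCoderivation_leftMul (h a)

theorem p_comp_coderOf (h : C →ₗ[A] Φ) : W.p ∘ₗ W.coderOf h = h := by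
  ext x
  have hp : ∀ t : C ⊗[A] C, W.p (W.m (rTensor C (W.ι ∘ₗ h) t))
      = h (TensorProduct.rid A C (lTensor C W.ε t)) := by
    intro t
    induction t using TensorProduct.induction_on with
    | zero => simp
    | tmul a b => simp [W.p_mul, W.ε_ι, W.p_ι]
    | add s t hs ht => simp only [map_add, hs, ht]
  rw [coderOf, comp_apply, comp_apply, comp_apply, hp, W.counit_right]

theorem coderOf_gbracket (f g : C →ₗ[A] Φ) :
    W.coderOf (W.gbracket f g) = W.coderOf f ∘ₗ W.coderOf g - W.coderOf g ∘ₗ W.coderOf f := by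
  refine sub_eq_zero.mp (W.cofree_coder _ (W.isCoderivation_sub (W.isCoderivation_coderOf _)
    (W.isCoderivation_commutator (W.isCoderivation_coderOf f) (W.isCoderivation_coderOf g))) ?_)
  rw [comp_sub, comp_sub, W.p_comp_coderOf, ← comp_assoc, ← comp_assoc, W.p_comp_coderOf,
    W.p_comp_coderOf, gbracket, gcomp, gcomp, sub_self]

theorem gbracket_jacobi (f g h : C →ₗ[A] Φ) :
    W.gbracket (W.gbracket f g) h + W.gbracket (W.gbracket g h) f
      + W.gbracket (W.gbracket h f) g = 0 := by
  have hdef : ∀ u v, W.gbracket u v = u ∘ₗ W.coderOf v - v ∘ₗ W.coderOf u := fun _ _ => rfl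
  rw [hdef (W.gbracket f g), hdef (W.gbracket g h), hdef (W.gbracket h f), coderOf_gbracket,
    coderOf_gbracket, coderOf_gbracket]
  simp only [hdef, sub_comp, comp_sub, comp_assoc]
  abel

def coderOfₗ : (C →ₗ[A] Φ) →ₗ[A] C →ₗ[A] C := W.sweedler ∘ₗ compRight A W.leftMul

theorem coderOfₗ_apply (h : C →ₗ[A] Φ) : W.coderOfₗ h = W.coderOf h :=
  (W.coderOf_eq_sweedler h).symm

def gcompₗ : (C →ₗ[A] Φ) →ₗ[A] (C →ₗ[A] Φ) →ₗ[A] C →ₗ[A] Φ :=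
  (llcomp A C C Φ).compl₂ W.coderOfₗ

def gbracketₗ : (C →ₗ[A] Φ) →ₗ[A] (C →ₗ[A] Φ) →ₗ[A] C →ₗ[A] Φ := W.gcompₗ - W.gcompₗ.flip

theorem gbracketₗ_apply (f g : C →ₗ[A] Φ) : W.gbracketₗ f g = W.gbracket f g := by
  simp [gbracketₗ, gcompₗ, coderOfₗ_apply, gbracket, gcomp, llcomp_apply']

variable {Ξ : Type*} [AddCommGroup Ξ] [Module A Ξ] (δ : Ξ →ₗ[A] C →ₗ[A] Φ)

def deltaHatₗ : (C →ₗ[A] Ξ) →ₗ[A] C →ₗ[A] Φ := W.sweedler ∘ₗ compRight A δ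

theorem deltaHatₗ_apply (π : C →ₗ[A] Ξ) : W.deltaHatₗ δ π = W.deltaHat δ π := rfl

theorem deltaHat_comp_of_isCoderivation (π : C →ₗ[A] Ξ) {X : C →ₗ[A] C}
    (hX : IsCoderivation W.Δ X) :
    W.deltaHat δ (π ∘ₗ X) = W.deltaHat δ π ∘ₗ X - W.sweedler ((δ ∘ₗ π).compl₂ X) :=
  eq_sub_of_add_eq (W.sweedler_comp_of_isCoderivation (δ ∘ₗ π) hX).symm

theorem coderOf_deltaHat_eq_sweedler (π : C →ₗ[A] Ξ) :
    W.coderOf (W.deltaHat δ π) = W.sweedler (W.coderOfₗ ∘ₗ δ ∘ₗ π) := by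
  rw [coderOf_eq_sweedler, deltaHat, ← sweedler_apply, comp_sweedler, sweedler_sweedler]
  rfl

theorem sweedler_compl₂_coderOf_deltaHat (π₁ π₂ : C →ₗ[A] Ξ) :
    W.sweedler ((δ ∘ₗ π₁).compl₂ (W.coderOf (W.deltaHat δ π₂))) =
      W.sweedler (W.sweedler (W.gcompₗ.compl₁₂ (δ ∘ₗ π₁) (δ ∘ₗ π₂))) := by
  rw [sweedler_sweedler, coderOf_deltaHat_eq_sweedler]
  congr 1
  ext1 a
  exact W.comp_sweedler (δ (π₁ a)) _

theorem cHat_eq_sweedler (Cm : Ξ →ₗ[A] Ξ →ₗ[A] C →ₗ[A] Ξ) (π₁ π₂ : C →ₗ[A] Ξ) :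
    W.cHat Cm π₁ π₂ = W.sweedler (W.sweedler (Cm.compl₁₂ π₁ π₂)) := by
  rw [cHat, ← comp_assoc, rTensor, lift_comp_map]
  rfl

theorem deltaHat_cHat_eq_sweedler (Cm : Ξ →ₗ[A] Ξ →ₗ[A] C →ₗ[A] Ξ) (π₁ π₂ : C →ₗ[A] Ξ) :
    W.deltaHat δ (W.cHat Cm π₁ π₂) =
      W.sweedler (W.sweedler ((Cm.compr₂ (W.deltaHatₗ δ)).compl₁₂ π₁ π₂)) := by
  rw [cHat_eq_sweedler, deltaHat, ← sweedler_apply, comp_sweedler, sweedler_sweedler,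
    show (Cm.compr₂ (W.deltaHatₗ δ)).compl₁₂ π₁ π₂ = (Cm.compl₁₂ π₁ π₂).compr₂ (W.deltaHatₗ δ)
      from rfl, ← comp_sweedler]
  rfl

theorem deltaHat_cHat (Cm : Ξ →ₗ[A] Ξ →ₗ[A] C →ₗ[A] Ξ)
    (hBBvD : ∀ ξ η : Ξ, W.gbracket (δ ξ) (δ η) = W.deltaHat δ (Cm ξ η)) (π₁ π₂ : C →ₗ[A] Ξ) :
    W.deltaHat δ (W.cHat Cm π₁ π₂) =
      W.sweedler ((δ ∘ₗ π₁).compl₂ (W.coderOf (W.deltaHat δ π₂))) -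
        W.sweedler ((δ ∘ₗ π₂).compl₂ (W.coderOf (W.deltaHat δ π₁))) := by
  have hCm : Cm.compr₂ (W.deltaHatₗ δ) = W.gbracketₗ.compl₁₂ δ δ := by
    ext1 ξ; ext1 η
    exact (hBBvD ξ η).symm.trans (W.gbracketₗ_apply _ _).symm
  rw [deltaHat_cHat_eq_sweedler, hCm, sweedler_compl₂_coderOf_deltaHat,
    sweedler_compl₂_coderOf_deltaHat, ← W.sweedler_flip (W.gcompₗ.compl₁₂ (δ ∘ₗ π₂) (δ ∘ₗ π₁)),
    ← map_sub, ← map_sub]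
  rfl

theorem deltaHat_parBracket (Cm : Ξ →ₗ[A] Ξ →ₗ[A] C →ₗ[A] Ξ)
    (hBBvD : ∀ ξ η : Ξ, W.gbracket (δ ξ) (δ η) = W.deltaHat δ (Cm ξ η)) (π₁ π₂ : C →ₗ[A] Ξ) :
    W.deltaHat δ (W.parBracket δ Cm π₁ π₂) = W.gbracket (W.deltaHat δ π₁) (W.deltaHat δ π₂) := by
  rw [parBracket, ← deltaHatₗ_apply, map_add, map_sub]
  simp only [deltaHatₗ_apply]
  rw [deltaHat_comp_of_isCoderivation _ _ _ (W.isCoderivation_coderOf _),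
    deltaHat_comp_of_isCoderivation _ _ _ (W.isCoderivation_coderOf _), deltaHat_cHat _ _ _ hBBvD,
    gbracket, gcomp, gcomp]
  abel

end WedgeBialgebra

variable {A Φ C Ξ : Type*} [CommRing A] [AddCommGroup Φ] [Module A Φ]
  [AddCommGroup C] [Module A C] [AddCommGroup Ξ] [Module A Ξ]

/-- Under the BBvD hypothesis, if `δ̂` is injective then the corrected
bracket on `Hom(Λ*Φ, Ξ)` satisfies the Jacobi identity. -/
theorem parBracket_jacobi_of_injective (W : WedgeBialgebra A Φ C)
    (δ : Ξ →ₗ[A] (C →ₗ[A] Φ)) (Cm : Ξ →ₗ[A] Ξ →ₗ[A] (C →ₗ[A] Ξ))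
    (hBBvD : ∀ ξ η : Ξ, W.gbracket (δ ξ) (δ η) = W.deltaHat δ (Cm ξ η))
    (hinj : Function.Injective (W.deltaHat δ)) :
    ∀ π₁ π₂ π₃ : C →ₗ[A] Ξ,
      W.parBracket δ Cm (W.parBracket δ Cm π₁ π₂) π₃ +
      W.parBracket δ Cm (W.parBracket δ Cm π₂ π₃) π₁ +
      W.parBracket δ Cm (W.parBracket δ Cm π₃ π₁) π₂ = 0 := by
  intro π₁ π₂ π₃
  apply hinj
  rw [← W.deltaHatₗ_apply, ← W.deltaHatₗ_apply, map_add, map_add, map_zero]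
  simp only [W.deltaHatₗ_apply, W.deltaHat_parBracket δ Cm hBBvD]
  exact W.gbracket_jacobi _ _ _
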